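/- Let L > 0, T > 0 and fix feedback gains α, β with 0 < |α| < 1 and β > 0. Every classical solution u of the closed-loop linear KP-II system on [0,L]² × [0,T] satisfies the identity T ∫_Ω u(x,y,0)² dx dy = ∫₀^T ∫_Ω u(x,y,t)² dx dy dt + 2β ∫₀^T ∫₀^L (T−t) u(x,L,t)² dx dt + (1−α²) ∫₀^T ∫₀^L (T−t) u_x(0,y,t)² dy dt + ∫₀^T ∫₀^L (T−t) ((∂ₓ⁻¹ u_y)(0,y,t))² dy dt. -/

import Mathlib

open MeasureTheory Real

noncomputable section

/-- Partial derivative in `x` of `u(x,y,t)`. -/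
def pdx (u : ℝ → ℝ → ℝ → ℝ) (x y t : ℝ) : ℝ := deriv (fun x' => u x' y t) x

/-- Third partial derivative in `x` of `u(x,y,t)`. -/
def pdx3 (u : ℝ → ℝ → ℝ → ℝ) (x y t : ℝ) : ℝ := iteratedDeriv 3 (fun x' => u x' y t) x

/-- Partial derivative in `y` of `u(x,y,t)`. -/
def pdy (u : ℝ → ℝ → ℝ → ℝ) (x y t : ℝ) : ℝ := deriv (fun y' => u x y' t) y

/-- Second partial derivative in `y` of `u(x,y,t)`. -/
def pdy2 (u : ℝ → ℝ → ℝ → ℝ) (x y t : ℝ) : ℝ := iteratedDeriv 2 (fun y' => u x y' t) y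

/-- Partial derivative in `t` of `u(x,y,t)`. -/
def pdt (u : ℝ → ℝ → ℝ → ℝ) (x y t : ℝ) : ℝ := deriv (fun t' => u x y t') t

/-- The nonlocal operator `(∂ₓ⁻¹ w)(x,y) = -∫ₓ^L w(s,y) ds`. -/
def pxInv (L : ℝ) (w : ℝ → ℝ → ℝ) (x y : ℝ) : ℝ := -(∫ s in x..L, w s y)

/-- A classical solution of the closed-loop linear KP-II system on `[0,L]² × [0,T]`:
`u` is `C³`, satisfies `u_t + u_x + u_xxx + ∂ₓ⁻¹ u_yy = 0` on `Ω × (0,T)` and the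
boundary feedback conditions for all `t ∈ [0,T]`. -/
def IsKPSolution (L T α β : ℝ) (u : ℝ → ℝ → ℝ → ℝ) : Prop :=
  ContDiff ℝ 3 (fun p : ℝ × ℝ × ℝ => u p.1 p.2.1 p.2.2) ∧
  (∀ x ∈ Set.Ioo (0:ℝ) L, ∀ y ∈ Set.Ioo (0:ℝ) L, ∀ t ∈ Set.Ioo (0:ℝ) T,
      pdt u x y t + pdx u x y t + pdx3 u x y t
        + pxInv L (fun s y' => pdy2 u s y' t) x y = 0) ∧
  (∀ y ∈ Set.Icc (0:ℝ) L, ∀ t ∈ Set.Icc (0:ℝ) T,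
      u 0 y t = 0 ∧ u L y t = 0 ∧ pdx u L y t = α * pdx u 0 y t) ∧
  (∀ x ∈ Set.Icc (0:ℝ) L, ∀ t ∈ Set.Icc (0:ℝ) T,
      pdy u x L t = β * pdx u x L t ∧ pdy u x 0 t = 0)

/-- The energy `E(t) = ½ ∫_Ω u(x,y,t)² dx dy`. -/
def energy (L : ℝ) (u : ℝ → ℝ → ℝ → ℝ) (t : ℝ) : ℝ :=
  (1/2) * ∫ x in (0:ℝ)..L, ∫ y in (0:ℝ)..L, (u x y t)^2

/-!
Multiply the equation by `2u` and integrate over `Ω`. The terms `u_x` and `u_xxx` integrate by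
parts in `x` to boundary terms, which the Dirichlet conditions and `u_x(L,y) = α u_x(0,y)` reduce
to `(1 - α²) ∫ u_x(0,y)²`. The nonlocal term is `∂_y V` with `V = ∂ₓ⁻¹ u_y`, so that `∂ₓ V = u_y`;
integrating by parts in `y` and then in `x`, with `V(x,0) = 0` and `V(x,L) = β u(x,L)` (from
`u_y = β u_x` on `y = L`), it contributes `2β ∫ u(x,L)² + ∫ V(0,y)²`. Hence
`∫_Ω 2 u u_t = -D(t)` for the dissipation `D(t)` of the right-hand side, and the identity follows by
integrating `(T - t) ∂_t (u²)` by parts over `(0,T)`, pointwise in `(x,y)`, and exchanging the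
order of integration.
-/

open Function Set

namespace KPTrace

section Calculus

lemma intervalIntegral_swap_of_continuous {f : ℝ → ℝ → ℝ} (hf : Continuous ↿f) (a b c d : ℝ) :
    ∫ x in a..b, ∫ y in c..d, f x y = ∫ y in c..d, ∫ x in a..b, f x y :=
  intervalIntegral_intervalIntegral_swap <|
    (hf.continuousOn.integrableOn_compact (isCompact_uIcc.prod isCompact_uIcc)).mono_set
      (prod_mono uIoc_subset_uIcc uIoc_subset_uIcc)

lemma intervalIntegral_swap₃_of_continuous {f : ℝ → ℝ → ℝ → ℝ} (hf : Continuous ↿f)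
    (a b c d a' b' : ℝ) :
    ∫ x in a..b, ∫ y in c..d, ∫ t in a'..b', f x y t
      = ∫ t in a'..b', ∫ x in a..b, ∫ y in c..d, f x y t := by
  have hinner : ∀ x, ∫ y in c..d, ∫ t in a'..b', f x y t = ∫ t in a'..b', ∫ y in c..d, f x y t :=
    fun x => intervalIntegral_swap_of_continuous (by fun_prop) _ _ _ _
  simp_rw [hinner]
  exact intervalIntegral_swap_of_continuous (by fun_prop) _ _ _ _

lemma integral_integral_add {f g : ℝ → ℝ → ℝ} (hf : Continuous ↿f) (hg : Continuous ↿g)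
    (a b c d : ℝ) :
    ∫ x in a..b, ∫ y in c..d, (f x y + g x y)
      = (∫ x in a..b, ∫ y in c..d, f x y) + ∫ x in a..b, ∫ y in c..d, g x y := by
  have hinner : ∀ x, ∫ y in c..d, (f x y + g x y) = (∫ y in c..d, f x y) + ∫ y in c..d, g x y :=
    fun x => intervalIntegral.integral_add ((hf.uncurry_left x).intervalIntegrable _ _)
      ((hg.uncurry_left x).intervalIntegrable _ _)
  simp_rw [hinner]
  exact intervalIntegral.integral_add
    ((by fun_prop : Continuous fun x => ∫ y in c..d, f x y).intervalIntegrable _ _)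
    ((by fun_prop : Continuous fun x => ∫ y in c..d, g x y).intervalIntegrable _ _)

lemma integral_integral_sub {f g : ℝ → ℝ → ℝ} (hf : Continuous ↿f) (hg : Continuous ↿g)
    (a b c d : ℝ) :
    ∫ x in a..b, ∫ y in c..d, (f x y - g x y)
      = (∫ x in a..b, ∫ y in c..d, f x y) - ∫ x in a..b, ∫ y in c..d, g x y := by
  have hinner : ∀ x, ∫ y in c..d, (f x y - g x y) = (∫ y in c..d, f x y) - ∫ y in c..d, g x y :=
    fun x => intervalIntegral.integral_sub ((hf.uncurry_left x).intervalIntegrable _ _)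
      ((hg.uncurry_left x).intervalIntegrable _ _)
  simp_rw [hinner]
  exact intervalIntegral.integral_sub
    ((by fun_prop : Continuous fun x => ∫ y in c..d, f x y).intervalIntegrable _ _)
    ((by fun_prop : Continuous fun x => ∫ y in c..d, g x y).intervalIntegrable _ _)

lemma integral_integral_congr_Ioo {f g : ℝ → ℝ → ℝ} {a b c d : ℝ} (hab : a ≤ b) (hcd : c ≤ d)
    (h : ∀ x ∈ Ioo a b, ∀ y ∈ Ioo c d, f x y = g x y) :
    ∫ x in a..b, ∫ y in c..d, f x y = ∫ x in a..b, ∫ y in c..d, g x y :=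
  intervalIntegral.integral_congr_Ioo_of_le hab fun x hx =>
    intervalIntegral.integral_congr_Ioo_of_le hcd (h x hx)

lemma integral_sub_mul_deriv_eq {f f' : ℝ → ℝ} {a b : ℝ}
    (hf : ∀ t ∈ uIcc a b, HasDerivAt f (f' t) t) (hf' : IntervalIntegrable f' volume a b) :
    ∫ t in a..b, (b - t) * f' t = (∫ t in a..b, f t) - (b - a) * f a := by
  have hweight : ∀ t ∈ uIcc a b, HasDerivAt (fun s => b - s) (-1) t :=
    fun t _ => by simpa using (hasDerivAt_id t).const_sub b
  rw [intervalIntegral.integral_mul_deriv_eq_deriv_mul hweight hf intervalIntegrable_const hf']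
  simp only [sub_self, zero_mul, neg_one_mul, intervalIntegral.integral_neg]
  ring

lemma hasDerivAt_integral_of_continuous_deriv {w w' : ℝ → ℝ → ℝ} (hw : Continuous ↿w)
    (hw' : Continuous ↿w') (hderiv : ∀ s y, HasDerivAt (w s) (w' s y) y) (a b y : ℝ) :
    HasDerivAt (fun y => ∫ s in a..b, w s y) (∫ s in a..b, w' s y) y := by
  have hftc : (fun y => ∫ s in a..b, w s y)
      = fun y => (∫ s in a..b, w s 0) + ∫ η in 0..y, ∫ s in a..b, w' s η := by
    funext y
    have hslice : ∀ s, w s y = w s 0 + ∫ η in 0..y, w' s η := fun s => by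
      rw [intervalIntegral.integral_eq_sub_of_hasDerivAt (fun η _ => hderiv s η)
        ((hw'.uncurry_left s).intervalIntegrable _ _)]
      ring
    simp_rw [hslice]
    rw [intervalIntegral.integral_add ((hw.uncurry_right 0).intervalIntegrable _ _)
      ((by fun_prop : Continuous fun s => ∫ η in 0..y, w' s η).intervalIntegrable _ _),
      intervalIntegral_swap_of_continuous hw']
  have hcont : Continuous fun η => ∫ s in a..b, w' s η := by fun_prop
  rw [hftc]
  exact (intervalIntegral.integral_hasDerivAt_right (hcont.intervalIntegrable _ _)
    (hcont.stronglyMeasurableAtFilter _ _) hcont.continuousAt).const_add _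

lemma mul_integral_integral_eq_sub_weighted {e e' : ℝ → ℝ → ℝ → ℝ} (he : Continuous ↿e)
    (he' : Continuous ↿e') (hderiv : ∀ x y t, HasDerivAt (e x y) (e' x y t) t) (a b c d T : ℝ) :
    T * ∫ x in a..b, ∫ y in c..d, e x y 0
      = (∫ t in 0..T, ∫ x in a..b, ∫ y in c..d, e x y t)
        - ∫ t in 0..T, (T - t) * ∫ x in a..b, ∫ y in c..d, e' x y t := by
  have hpointwise : ∀ x y,
      T * e x y 0 = (∫ t in 0..T, e x y t) - ∫ t in 0..T, (T - t) * e' x y t := fun x y => by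
    rw [integral_sub_mul_deriv_eq (fun t _ => hderiv x y t)
      ((by fun_prop : Continuous (e' x y)).intervalIntegrable _ _)]
    ring
  simp_rw [← intervalIntegral.integral_const_mul, hpointwise]
  rw [integral_integral_sub (by fun_prop) (by fun_prop),
    intervalIntegral_swap₃_of_continuous (f := e) he,
    intervalIntegral_swap₃_of_continuous (f := fun x y t => (T - t) * e' x y t) (by fun_prop)]

lemma integral_two_mul_mul_deriv {g g' : ℝ → ℝ} (hg : ∀ x, HasDerivAt g (g' x) x)
    (hg' : Continuous g') (a b : ℝ) :
    ∫ x in a..b, 2 * g x * g' x = g b ^ 2 - g a ^ 2 := by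
  have hcont : Continuous g := continuous_iff_continuousAt.2 fun x => (hg x).continuousAt
  exact intervalIntegral.integral_eq_sub_of_hasDerivAt
    (fun x _ => ((hg x).fun_pow 2).congr_deriv (by ring))
    ((by fun_prop : Continuous fun x => 2 * g x * g' x).intervalIntegrable _ _)

lemma integral_two_mul_mul_third_deriv {f f₁ f₂ f₃ : ℝ → ℝ} (h₀ : ∀ x, HasDerivAt f (f₁ x) x)
    (h₁ : ∀ x, HasDerivAt f₁ (f₂ x) x) (h₂ : ∀ x, HasDerivAt f₂ (f₃ x) x) (hf₃ : Continuous f₃)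
    (a b : ℝ) :
    ∫ x in a..b, 2 * f x * f₃ x = (2 * f b * f₂ b - f₁ b ^ 2) - (2 * f a * f₂ a - f₁ a ^ 2) := by
  have hcont : Continuous f := continuous_iff_continuousAt.2 fun x => (h₀ x).continuousAt
  exact intervalIntegral.integral_eq_sub_of_hasDerivAt
    (fun x _ => ((((h₀ x).const_mul 2).mul (h₂ x)).sub ((h₁ x).fun_pow 2)).congr_deriv (by ring))
    ((by fun_prop : Continuous fun x => 2 * f x * f₃ x).intervalIntegrable _ _)

end Calculus

section PartialDerivatives

variable {u : ℝ → ℝ → ℝ → ℝ}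

lemma pdx_eq_fderiv (hu : Differentiable ℝ ↿u) (x y t : ℝ) :
    pdx u x y t = fderiv ℝ ↿u (x, y, t) (1, 0, 0) :=
  ((hu _).hasFDerivAt.comp_hasDerivAt x
    ((hasDerivAt_id x).prodMk (hasDerivAt_const x (y, t)))).deriv

lemma pdy_eq_fderiv (hu : Differentiable ℝ ↿u) (x y t : ℝ) :
    pdy u x y t = fderiv ℝ ↿u (x, y, t) (0, 1, 0) :=
  ((hu _).hasFDerivAt.comp_hasDerivAt y
    ((hasDerivAt_const y x).prodMk ((hasDerivAt_id y).prodMk (hasDerivAt_const y t)))).deriv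

lemma pdt_eq_fderiv (hu : Differentiable ℝ ↿u) (x y t : ℝ) :
    pdt u x y t = fderiv ℝ ↿u (x, y, t) (0, 0, 1) :=
  ((hu _).hasFDerivAt.comp_hasDerivAt t
    ((hasDerivAt_const t x).prodMk ((hasDerivAt_const t y).prodMk (hasDerivAt_id t)))).deriv

lemma contDiff_pdx {n : ℕ} (hu : ContDiff ℝ (n + 1) ↿u) : ContDiff ℝ n ↿(pdx u) := by
  have h : ↿(pdx u) = fun p => fderiv ℝ ↿u p (1, 0, 0) :=
    funext fun p => pdx_eq_fderiv (hu.differentiable (by simp)) p.1 p.2.1 p.2.2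
  rw [h]
  exact (hu.fderiv_right le_rfl).clm_apply contDiff_const

lemma contDiff_pdy {n : ℕ} (hu : ContDiff ℝ (n + 1) ↿u) : ContDiff ℝ n ↿(pdy u) := by
  have h : ↿(pdy u) = fun p => fderiv ℝ ↿u p (0, 1, 0) :=
    funext fun p => pdy_eq_fderiv (hu.differentiable (by simp)) p.1 p.2.1 p.2.2
  rw [h]
  exact (hu.fderiv_right le_rfl).clm_apply contDiff_const

lemma contDiff_pdt {n : ℕ} (hu : ContDiff ℝ (n + 1) ↿u) : ContDiff ℝ n ↿(pdt u) := by
  have h : ↿(pdt u) = fun p => fderiv ℝ ↿u p (0, 0, 1) :=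
    funext fun p => pdt_eq_fderiv (hu.differentiable (by simp)) p.1 p.2.1 p.2.2
  rw [h]
  exact (hu.fderiv_right le_rfl).clm_apply contDiff_const

lemma hasDerivAt_pdx (hu : Differentiable ℝ ↿u) (x y t : ℝ) :
    HasDerivAt (fun x => u x y t) (pdx u x y t) x :=
  ((hu.comp (by fun_prop : Differentiable ℝ fun x : ℝ => (x, y, t))) x).hasDerivAt

lemma hasDerivAt_pdy (hu : Differentiable ℝ ↿u) (x y t : ℝ) :
    HasDerivAt (fun y => u x y t) (pdy u x y t) y :=
  ((hu.comp (by fun_prop : Differentiable ℝ fun y : ℝ => (x, y, t))) y).hasDerivAt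

lemma hasDerivAt_pdt (hu : Differentiable ℝ ↿u) (x y t : ℝ) :
    HasDerivAt (u x y) (pdt u x y t) t :=
  ((hu.comp (by fun_prop : Differentiable ℝ fun t : ℝ => (x, y, t))) t).hasDerivAt

lemma pdx3_eq : pdx3 u = pdx (pdx (pdx u)) := by
  funext x y t
  rw [pdx3, iteratedDeriv_eq_iterate]
  rfl

lemma pdy2_eq : pdy2 u = pdy (pdy u) := by
  funext x y t
  rw [pdy2, iteratedDeriv_eq_iterate]
  rfl

end PartialDerivatives

section NonlocalOperator

def pxInvT (L : ℝ) (w : ℝ → ℝ → ℝ → ℝ) (x y t : ℝ) : ℝ := pxInv L (fun s y' => w s y' t) x y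

variable {L : ℝ} {w : ℝ → ℝ → ℝ → ℝ}

lemma pxInvT_eq_integral (x y t : ℝ) : pxInvT L w x y t = ∫ s in L..x, w s y t := by
  rw [pxInvT, pxInv, intervalIntegral.integral_symm, neg_neg]

lemma pxInvT_self (y t : ℝ) : pxInvT L w L y t = 0 := by
  simp [pxInvT_eq_integral]

lemma continuous_pxInvT (hw : Continuous ↿w) : Continuous ↿(pxInvT L w) := by
  have h : ↿(pxInvT L w) = fun p => ∫ s in L..p.1, w s p.2.1 p.2.2 :=
    funext fun p => pxInvT_eq_integral p.1 p.2.1 p.2.2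
  rw [h]
  fun_prop

lemma hasDerivAt_pxInvT_x (hw : Continuous ↿w) (x y t : ℝ) :
    HasDerivAt (fun x => pxInvT L w x y t) (w x y t) x := by
  have hslice : Continuous fun s => w s y t := by fun_prop
  simp_rw [pxInvT_eq_integral]
  exact intervalIntegral.integral_hasDerivAt_right (hslice.intervalIntegrable _ _)
    (hslice.stronglyMeasurableAtFilter _ _) hslice.continuousAt

lemma hasDerivAt_pxInvT_y (hw : ContDiff ℝ 1 ↿w) (x y t : ℝ) :
    HasDerivAt (fun y => pxInvT L w x y t) (pxInvT L (pdy w) x y t) y := by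
  have hpdy : Continuous ↿(pdy w) := (contDiff_pdy (n := 0) (by simpa using hw)).continuous
  simp_rw [pxInvT_eq_integral]
  exact hasDerivAt_integral_of_continuous_deriv (w := fun s y => w s y t)
    (w' := fun s y => pdy w s y t) (by fun_prop) (by fun_prop)
    (fun s y => hasDerivAt_pdy hw.differentiable_one s y t) L x y

lemma pxInvT_eq_zero {x y t : ℝ} (hzero : ∀ s ∈ Icc 0 L, w s y t = 0) (hx : x ∈ Icc 0 L) :
    pxInvT L w x y t = 0 := by
  rw [pxInvT, pxInv, neg_eq_zero]
  refine (intervalIntegral.integral_congr fun s hs => ?_).trans intervalIntegral.integral_zero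
  rw [uIcc_of_le hx.2] at hs
  exact hzero s ⟨hx.1.trans hs.1, hs.2⟩

end NonlocalOperator

section FixedTime

variable {L α β t : ℝ} {u : ℝ → ℝ → ℝ → ℝ}

lemma integral_integral_two_mul_pdx_eq_zero (hu : ContDiff ℝ 1 ↿u) (hL : 0 ≤ L)
    (hleft : ∀ y ∈ Icc 0 L, u 0 y t = 0) (hright : ∀ y ∈ Icc 0 L, u L y t = 0) :
    ∫ x in 0..L, ∫ y in 0..L, 2 * u x y t * pdx u x y t = 0 := by
  have hpdx : Continuous ↿(pdx u) := (contDiff_pdx (n := 0) (by simpa using hu)).continuous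
  have hu' := hu.continuous
  rw [intervalIntegral_swap_of_continuous (f := fun x y => 2 * u x y t * pdx u x y t)
    (by fun_prop)]
  refine (intervalIntegral.integral_congr fun y hy => ?_).trans intervalIntegral.integral_zero
  rw [uIcc_of_le hL] at hy
  rw [integral_two_mul_mul_deriv (fun x => hasDerivAt_pdx hu.differentiable_one x y t)
    (by fun_prop), hleft y hy, hright y hy]
  ring

lemma integral_integral_two_mul_pdx3 (hu : ContDiff ℝ 3 ↿u) (hL : 0 ≤ L)
    (hleft : ∀ y ∈ Icc 0 L, u 0 y t = 0) (hright : ∀ y ∈ Icc 0 L, u L y t = 0)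
    (hfeedback : ∀ y ∈ Icc 0 L, pdx u L y t = α * pdx u 0 y t) :
    ∫ x in 0..L, ∫ y in 0..L, 2 * u x y t * pdx3 u x y t
      = (1 - α ^ 2) * ∫ y in 0..L, pdx u 0 y t ^ 2 := by
  have hu₂ : ContDiff ℝ 2 ↿(pdx u) := contDiff_pdx hu
  have hu₁ : ContDiff ℝ 1 ↿(pdx (pdx u)) := contDiff_pdx hu₂
  have hu₀ : Continuous ↿(pdx (pdx (pdx u))) :=
    (contDiff_pdx (n := 0) (by simpa using hu₁)).continuous
  have hu' := hu.continuous
  rw [pdx3_eq, intervalIntegral_swap_of_continuous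
    (f := fun x y => 2 * u x y t * pdx (pdx (pdx u)) x y t) (by fun_prop),
    ← intervalIntegral.integral_const_mul]
  refine intervalIntegral.integral_congr fun y hy => ?_
  rw [uIcc_of_le hL] at hy
  rw [integral_two_mul_mul_third_deriv (fun x => hasDerivAt_pdx (hu.differentiable (by simp)) x y t)
    (fun x => hasDerivAt_pdx (hu₂.differentiable (by simp)) x y t)
    (fun x => hasDerivAt_pdx hu₁.differentiable_one x y t) (by fun_prop),
    hleft y hy, hright y hy, hfeedback y hy]
  ring

lemma pxInvT_pdy_of_feedback (hu : ContDiff ℝ 1 ↿u) (hLL : u L L t = 0)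
    (htop : ∀ x ∈ Icc 0 L, pdy u x L t = β * pdx u x L t) {x : ℝ} (hx : x ∈ Icc 0 L) :
    pxInvT L (pdy u) x L t = β * u x L t := by
  have hpdx : Continuous ↿(pdx u) := (contDiff_pdx (n := 0) (by simpa using hu)).continuous
  have hcongr : ∫ s in x..L, pdy u s L t = ∫ s in x..L, β * pdx u s L t := by
    refine intervalIntegral.integral_congr fun s hs => ?_
    rw [uIcc_of_le hx.2] at hs
    exact htop s ⟨hx.1.trans hs.1, hs.2⟩
  rw [pxInvT, pxInv, hcongr, intervalIntegral.integral_const_mul,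
    intervalIntegral.integral_eq_sub_of_hasDerivAt
      (fun s _ => hasDerivAt_pdx hu.differentiable_one s L t)
      ((by fun_prop : Continuous fun s => pdx u s L t).intervalIntegrable _ _), hLL]
  ring

lemma integral_integral_two_mul_pxInvT_pdy2 (hu : ContDiff ℝ 2 ↿u) (hL : 0 ≤ L) (hLL : u L L t = 0)
    (htop : ∀ x ∈ Icc 0 L, pdy u x L t = β * pdx u x L t)
    (hbot : ∀ x ∈ Icc 0 L, pdy u x 0 t = 0) :
    ∫ x in 0..L, ∫ y in 0..L, 2 * u x y t * pxInvT L (pdy2 u) x y t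
      = 2 * β * (∫ x in 0..L, u x L t ^ 2) + ∫ y in 0..L, pxInvT L (pdy u) 0 y t ^ 2 := by
  set V := pxInvT L (pdy u)
  have hu₁ : ContDiff ℝ 1 ↿(pdy u) := contDiff_pdy hu
  have hpdy : Continuous ↿(pdy u) := hu₁.continuous
  have hpdy2 : Continuous ↿(pdy (pdy u)) := (contDiff_pdy (n := 0) (by simpa using hu₁)).continuous
  have hV : Continuous ↿V := continuous_pxInvT hpdy
  have hQ : Continuous ↿(pxInvT L (pdy (pdy u))) := continuous_pxInvT hpdy2
  have hu' := hu.continuous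
  have hdu : Differentiable ℝ ↿u := hu.differentiable (by simp)
  -- integration by parts in `y`, using `∂ᵧ V = ∂ₓ⁻¹ u_yy`
  have hslice : ∀ x ∈ Icc 0 L, ∫ y in 0..L, 2 * u x y t * pxInvT L (pdy (pdy u)) x y t
      = 2 * β * u x L t ^ 2 - ∫ y in 0..L, 2 * pdy u x y t * V x y t := by
    intro x hx
    rw [intervalIntegral.integral_mul_deriv_eq_deriv_mul
      (fun y _ => (hasDerivAt_pdy hdu x y t).const_mul 2)
      (fun y _ => hasDerivAt_pxInvT_y hu₁ x y t)
      ((by fun_prop : Continuous fun y => 2 * pdy u x y t).intervalIntegrable _ _)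
      ((by fun_prop : Continuous fun y => pxInvT L (pdy (pdy u)) x y t).intervalIntegrable _ _),
      pxInvT_pdy_of_feedback (hu.of_le (by norm_num)) hLL htop hx, pxInvT_eq_zero hbot hx]
    ring
  -- integration by parts in `x`, using `∂ₓ V = u_y`
  have hsquare : ∀ y, ∫ x in 0..L, 2 * V x y t * pdy u x y t = -V 0 y t ^ 2 := fun y => by
    rw [integral_two_mul_mul_deriv (fun x => hasDerivAt_pxInvT_x hpdy x y t) (by fun_prop),
      pxInvT_self]
    ring
  rw [pdy2_eq, intervalIntegral.integral_congr (fun x hx => hslice x (uIcc_of_le hL ▸ hx)),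
    intervalIntegral.integral_sub
      ((by fun_prop : Continuous fun x => 2 * β * u x L t ^ 2).intervalIntegrable _ _)
      ((by fun_prop : Continuous fun x => ∫ y in 0..L, 2 * pdy u x y t * V x y t).intervalIntegrable
        _ _),
    intervalIntegral_swap_of_continuous (f := fun x y => 2 * pdy u x y t * V x y t) (by fun_prop)]
  simp_rw [mul_right_comm _ (pdy u _ _ _), hsquare, intervalIntegral.integral_neg,
    intervalIntegral.integral_const_mul]
  ring

lemma integral_integral_two_mul_pdt (hu : ContDiff ℝ 3 ↿u) (hL : 0 ≤ L)
    (hpde : ∀ x ∈ Ioo 0 L, ∀ y ∈ Ioo 0 L,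
      pdt u x y t + pdx u x y t + pdx3 u x y t + pxInvT L (pdy2 u) x y t = 0)
    (hbc : ∀ y ∈ Icc 0 L, u 0 y t = 0 ∧ u L y t = 0 ∧ pdx u L y t = α * pdx u 0 y t)
    (hbc' : ∀ x ∈ Icc 0 L, pdy u x L t = β * pdx u x L t ∧ pdy u x 0 t = 0) :
    ∫ x in 0..L, ∫ y in 0..L, 2 * u x y t * pdt u x y t
      = -(2 * β * (∫ x in 0..L, u x L t ^ 2) + (1 - α ^ 2) * (∫ y in 0..L, pdx u 0 y t ^ 2)
          + ∫ y in 0..L, pxInvT L (pdy u) 0 y t ^ 2) := by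
  have hpde' : ∀ x ∈ Ioo 0 L, ∀ y ∈ Ioo 0 L, 2 * u x y t * pdt u x y t
      = -(2 * u x y t * pdx u x y t + 2 * u x y t * pdx3 u x y t
          + 2 * u x y t * pxInvT L (pdy2 u) x y t) := fun x hx y hy => by
    linear_combination 2 * u x y t * hpde x hx y hy
  have hcont := hu.continuous
  have hpdx : Continuous ↿(pdx u) := (contDiff_pdx (n := 2) hu).continuous
  have hpdx3 : Continuous ↿(pdx3 u) := by
    rw [pdx3_eq]
    exact (contDiff_pdx (n := 0) (contDiff_pdx (n := 1) (contDiff_pdx (n := 2) hu))).continuous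
  have hQ : Continuous ↿(pxInvT L (pdy2 u)) := by
    rw [pdy2_eq]
    exact continuous_pxInvT
      (contDiff_pdy (n := 0) (contDiff_pdy (n := 1) (hu.of_le (by norm_num)))).continuous
  have hleft : ∀ y ∈ Icc 0 L, u 0 y t = 0 := fun y hy => (hbc y hy).1
  have hright : ∀ y ∈ Icc 0 L, u L y t = 0 := fun y hy => (hbc y hy).2.1
  rw [integral_integral_congr_Ioo hL hL hpde']
  simp_rw [intervalIntegral.integral_neg]
  rw [integral_integral_add (by fun_prop) (by fun_prop),
    integral_integral_add (by fun_prop) (by fun_prop),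
    integral_integral_two_mul_pdx_eq_zero (hu.of_le (by norm_num)) hL hleft hright,
    integral_integral_two_mul_pdx3 hu hL hleft hright (fun y hy => (hbc y hy).2.2),
    integral_integral_two_mul_pxInvT_pdy2 (hu.of_le (by norm_num)) hL (hright L ⟨hL, le_rfl⟩)
      (fun x hx => (hbc' x hx).1) (fun x hx => (hbc' x hx).2)]
  ring

end FixedTime

end KPTrace

open KPTrace in
theorem kp_trace_identity_general (L T α β : ℝ) (hL : 0 < L) (hT : 0 < T)
    (u : ℝ → ℝ → ℝ → ℝ) (hu : IsKPSolution L T α β u) :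
    T * (∫ x in (0:ℝ)..L, ∫ y in (0:ℝ)..L, (u x y 0)^2)
      = (∫ t in (0:ℝ)..T, ∫ x in (0:ℝ)..L, ∫ y in (0:ℝ)..L, (u x y t)^2)
        + 2 * β * (∫ t in (0:ℝ)..T, ∫ x in (0:ℝ)..L, (T - t) * (u x L t)^2)
        + (1 - α^2) * (∫ t in (0:ℝ)..T, ∫ y in (0:ℝ)..L, (T - t) * (pdx u 0 y t)^2)
        + (∫ t in (0:ℝ)..T, ∫ y in (0:ℝ)..L,
            (T - t) * (pxInv L (fun s y' => pdy u s y' t) 0 y)^2) := by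
  obtain ⟨hsmooth, hpde, hbc, hbc'⟩ := hu
  have hu : ContDiff ℝ 3 ↿u := hsmooth
  have hcont := hu.continuous
  have hpdx : Continuous ↿(pdx u) := (contDiff_pdx (n := 2) hu).continuous
  have hpdt : Continuous ↿(pdt u) := (contDiff_pdt (n := 2) hu).continuous
  have hV : Continuous ↿(pxInvT L (pdy u)) :=
    continuous_pxInvT (contDiff_pdy (n := 2) hu).continuous
  have hdissipation : ∀ t ∈ Ioo 0 T,
      (T - t) * ∫ x in 0..L, ∫ y in 0..L, 2 * u x y t * pdt u x y t
        = -(2 * β * (∫ x in 0..L, (T - t) * u x L t ^ 2)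
          + (1 - α ^ 2) * (∫ y in 0..L, (T - t) * pdx u 0 y t ^ 2)
          + ∫ y in 0..L, (T - t) * pxInvT L (pdy u) 0 y t ^ 2) := fun t ht => by
    rw [integral_integral_two_mul_pdt hu hL.le (hpde · · · · t ht)
      (hbc · · t (Ioo_subset_Icc_self ht)) (hbc' · · t (Ioo_subset_Icc_self ht))]
    simp only [intervalIntegral.integral_const_mul]
    ring
  rw [mul_integral_integral_eq_sub_weighted (e := fun x y t => u x y t ^ 2)
      (e' := fun x y t => 2 * u x y t * pdt u x y t) (by fun_prop) (by fun_prop)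
      (fun x y t => ((hasDerivAt_pdt (hu.differentiable (by simp)) x y t).fun_pow 2).congr_deriv
        (by ring)),
    intervalIntegral.integral_congr_Ioo_of_le hT.le hdissipation, intervalIntegral.integral_neg,
    intervalIntegral.integral_add, intervalIntegral.integral_add,
    intervalIntegral.integral_const_mul, intervalIntegral.integral_const_mul]
  · simp only [pxInvT]
    ring
  all_goals apply Continuous.intervalIntegrable; fun_prop

/-- Trace identity: every classical solution of the closed-loop linear KP-II system
satisfies
`T ∫_Ω u(·,·,0)² = ∫₀^T ∫_Ω u² + 2β ∫₀^T ∫₀^L (T-t) u(x,L,t)²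
  + (1-α²) ∫₀^T ∫₀^L (T-t) u_x(0,y,t)² + ∫₀^T ∫₀^L (T-t) ((∂ₓ⁻¹ u_y)(0,y,t))²`. -/
theorem kp_trace_identity (L T α β : ℝ) (hL : 0 < L) (hT : 0 < T)
    (hα0 : 0 < |α|) (hα1 : |α| < 1) (hβ : 0 < β)
    (u : ℝ → ℝ → ℝ → ℝ) (hu : IsKPSolution L T α β u) :
    T * (∫ x in (0:ℝ)..L, ∫ y in (0:ℝ)..L, (u x y 0)^2)
      = (∫ t in (0:ℝ)..T, ∫ x in (0:ℝ)..L, ∫ y in (0:ℝ)..L, (u x y t)^2)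
        + 2 * β * (∫ t in (0:ℝ)..T, ∫ x in (0:ℝ)..L, (T - t) * (u x L t)^2)
        + (1 - α^2) * (∫ t in (0:ℝ)..T, ∫ y in (0:ℝ)..L, (T - t) * (pdx u 0 y t)^2)
        + (∫ t in (0:ℝ)..T, ∫ y in (0:ℝ)..L,
            (T - t) * (pxInv L (fun s y' => pdy u s y' t) 0 y)^2) :=
  kp_trace_identity_general L T α β hL hT u hu
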